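/- arXiv:2601.21166 — 3 statements merged into one kernel-verified Lean document; each statement's English description precedes it below -/
import Mathlib

section
/- Let Z₁, …, Z_N be independent identically distributed random variables taking values in [−1, 1], and suppose there exist ρ̄ ∈ (0, 1] and C ≥ 1 with E[Z₁] ≥ ρ̄ and E[Z₁²] ≤ C ρ̄. Then Pr(Σ_{n=1}^N Z_n ≤ 0) ≤ exp(− N ρ̄ / (2C + 4/3)). -/
open MeasureTheory ProbabilityTheory Real

/-!
Chernoff's method with Bernstein's moment-generating-function estimate, applied directly to the
(uncentered) `Z n`: from `|x| ≤ a < 3` one gets `exp x ≤ 1 + x + x² / (2 (1 - a / 3))` by comparing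
the exponential series with a geometric one, hence for `|Z| ≤ 1` and `0 ≤ s < 3`
`E[exp (-s Z)] ≤ exp (-s E[Z] + s² E[Z²] / (2 (1 - s / 3)))`. The choice `s = 1 / (C + 1/3)` makes
`1 - s / 3 = C s`, so the quadratic term is at most half the linear one and each factor is bounded
by `exp (-ρ̄ / (2C + 2/3)) ≤ exp (-ρ̄ / (2C + 4/3))`.
-/

theorem Real.exp_sub_one_sub_le_of_abs_le {x a : ℝ} (hxa : |x| ≤ a) (ha : a < 3) :
    exp x - 1 - x ≤ x ^ 2 / (2 * (1 - a / 3)) := by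
  have ha0 : 0 ≤ a := (abs_nonneg x).trans hxa
  have hexp : HasSum (fun n : ℕ ↦ x ^ (n + 2) / (n + 2).factorial) (exp x - 1 - x) := by
    have := (hasSum_nat_add_iff' 2).mpr (exp_eq_exp_ℝ ▸ NormedSpace.expSeries_div_hasSum_exp x)
    simpa [Finset.sum_range_succ, sub_sub] using this
  have hgeom : HasSum (fun n : ℕ ↦ x ^ 2 / 2 * (a / 3) ^ n) (x ^ 2 / (2 * (1 - a / 3))) := by
    have := (hasSum_geometric_of_lt_one (r := a / 3) (by positivity) (by linarith)).mul_left
      (x ^ 2 / 2)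
    rwa [← div_eq_mul_inv, div_div] at this
  refine hasSum_le (fun n ↦ ?_) hexp hgeom
  have hfact : (2 * 3 ^ n : ℝ) ≤ (n + 2).factorial := by
    rw [add_comm n 2]
    exact_mod_cast @Nat.factorial_mul_pow_le_factorial 2 n
  have hpow : x ^ n ≤ a ^ n :=
    (le_abs_self _).trans ((abs_pow x n).trans_le (pow_le_pow_left₀ (abs_nonneg x) hxa n))
  calc x ^ (n + 2) / (n + 2).factorial = x ^ 2 * x ^ n / (n + 2).factorial := by ring
    _ ≤ x ^ 2 * a ^ n / (2 * 3 ^ n) := by gcongr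
    _ = x ^ 2 / 2 * (a / 3) ^ n := by rw [div_pow]; ring

namespace ProbabilityTheory

variable {Ω : Type*} [MeasurableSpace Ω] {μ : Measure Ω}

theorem measureReal_sum_le_le_exp_mul_mgf_pow [IsFiniteMeasure μ] {ι : Type*} [Fintype ι]
    {X : ι → Ω → ℝ} (hmeas : ∀ i, Measurable (X i)) (hindep : iIndepFun X μ)
    (hident : ∀ i j, IdentDistrib (X i) (X j) μ μ) (j : ι) (ε : ℝ) {t : ℝ} (ht : t ≤ 0)
    (hint : ∀ i, Integrable (fun ω ↦ exp (t * X i ω)) μ) :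
    μ.real {ω | ∑ i, X i ω ≤ ε} ≤ exp (-t * ε) * mgf (X j) μ t ^ Fintype.card ι := by
  have hsum := measure_le_le_exp_mul_mgf ε ht
    (hindep.integrable_exp_mul_sum (s := Finset.univ) hmeas fun i _ ↦ hint i)
  rw [mgf_sum_of_identDistrib hmeas hindep (fun i _ j _ ↦ hident i j) (Finset.mem_univ j),
    Finset.card_univ] at hsum
  simpa only [Finset.sum_apply] using hsum

variable [IsProbabilityMeasure μ] {X : Ω → ℝ}

theorem mgf_le_exp_of_abs_le_one (hX : AEMeasurable X μ) (hbdd : ∀ᵐ ω ∂μ, |X ω| ≤ 1) {t : ℝ}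
    (ht : |t| < 3) :
    mgf X μ t ≤ exp (t * ∫ ω, X ω ∂μ + t ^ 2 / (2 * (1 - |t| / 3)) * ∫ ω, X ω ^ 2 ∂μ) := by
  set c := t ^ 2 / (2 * (1 - |t| / 3))
  have hint : Integrable X μ := .of_bound hX.aestronglyMeasurable 1 (by simpa using hbdd)
  have hint_sq : Integrable (fun ω ↦ X ω ^ 2) μ :=
    .of_bound (hX.pow_const 2).aestronglyMeasurable 1 <| by
      filter_upwards [hbdd] with ω hω
      simpa [abs_le] using hω
  have hpt : ∀ᵐ ω ∂μ, exp (t * X ω) ≤ 1 + t * X ω + c * X ω ^ 2 := by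
    filter_upwards [hbdd] with ω hω
    have hle : |t * X ω| ≤ |t| := by
      rw [abs_mul]; exact mul_le_of_le_one_right (abs_nonneg t) hω
    have := exp_sub_one_sub_le_of_abs_le hle ht
    rw [mul_pow] at this
    linarith [show t ^ 2 * X ω ^ 2 / (2 * (1 - |t| / 3)) = c * X ω ^ 2 by ring]
  have hint_lin : Integrable (fun ω ↦ 1 + t * X ω) μ := (integrable_const 1).add (hint.const_mul t)
  calc mgf X μ t ≤ ∫ ω, (1 + t * X ω + c * X ω ^ 2) ∂μ :=
        integral_mono_ae (integrable_exp_mul_of_mem_Icc hX (a := -1) (b := 1)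
          (by simpa [abs_le] using hbdd)) (hint_lin.add (hint_sq.const_mul c)) hpt
    _ = 1 + (t * ∫ ω, X ω ∂μ + c * ∫ ω, X ω ^ 2 ∂μ) := by
        rw [integral_add hint_lin (hint_sq.const_mul c),
          integral_add (integrable_const 1) (hint.const_mul t), integral_const_mul,
          integral_const_mul]
        simp [add_assoc]
    _ ≤ _ := (add_one_le_exp _).trans_eq' (add_comm _ _)

theorem mgf_neg_le_exp_of_abs_le_one (hX : AEMeasurable X μ) (hbdd : ∀ᵐ ω ∂μ, |X ω| ≤ 1)
    {ρ C : ℝ} (hC : 0 < C) (hmean : ρ ≤ ∫ ω, X ω ∂μ) (hsq : ∫ ω, X ω ^ 2 ∂μ ≤ C * ρ) :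
    mgf X μ (-(C + 1 / 3)⁻¹) ≤ exp (-ρ / (2 * C + 2 / 3)) := by
  set s := (C + 1 / 3)⁻¹ with hs
  have hs0 : 0 < s := by positivity
  have hs3 : s < 3 := by rw [hs, inv_lt_comm₀ (by positivity) (by norm_num)]; linarith
  have hCs : 1 - s / 3 = C * s := by rw [hs]; field_simp; ring
  refine (mgf_le_exp_of_abs_le_one hX hbdd (by rwa [abs_neg, abs_of_pos hs0])).trans ?_
  rw [abs_neg, abs_of_pos hs0, hCs, exp_le_exp]
  have hlin : -s * ∫ ω, X ω ∂μ ≤ -s * ρ := mul_le_mul_of_nonpos_left hmean (by linarith)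
  have hquad : (-s) ^ 2 / (2 * (C * s)) * ∫ ω, X ω ^ 2 ∂μ ≤ s * ρ / 2 := by
    calc (-s) ^ 2 / (2 * (C * s)) * ∫ ω, X ω ^ 2 ∂μ ≤ (-s) ^ 2 / (2 * (C * s)) * (C * ρ) := by
          gcongr
      _ = s * ρ / 2 := by field_simp
  have : -ρ / (2 * C + 2 / 3) = -s * ρ / 2 := by rw [hs]; field_simp
  linarith

end ProbabilityTheory

/-- Core ranking-error bound: for i.i.d. scores `Z₁, …, Z_N` in `[−1,1]` with
`E[Z₁] ≥ ρ̄` and `E[Z₁²] ≤ C ρ̄`, the probability that the sum is nonpositive is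
at most `exp(−N ρ̄ / (2C + 4/3))`. -/
theorem vote_sum_nonpos_prob_bound
    {Ω : Type*} [MeasurableSpace Ω] (μ : Measure Ω) [IsProbabilityMeasure μ]
    {N : ℕ} (hN : 0 < N) (Z : Fin N → Ω → ℝ)
    (hmeas : ∀ n, Measurable (Z n))
    (hindep : iIndepFun Z μ)
    (hident : ∀ n m, IdentDistrib (Z n) (Z m) μ μ)
    (hbdd : ∀ n ω, Z n ω ∈ Set.Icc (-1 : ℝ) 1)
    (ρ C : ℝ) (hρ : ρ ∈ Set.Ioc (0 : ℝ) 1) (hC : 1 ≤ C)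
    (hmean : ρ ≤ ∫ ω, Z ⟨0, hN⟩ ω ∂μ)
    (hvar : ∫ ω, (Z ⟨0, hN⟩ ω) ^ 2 ∂μ ≤ C * ρ) :
    μ {ω | ∑ n, Z n ω ≤ 0} ≤ ENNReal.ofReal (Real.exp (-(N * ρ) / (2 * C + 4 / 3))) := by
  have hmgf := mgf_neg_le_exp_of_abs_le_one (hmeas _).aemeasurable
    (ae_of_all _ fun ω ↦ abs_le.mpr (hbdd ⟨0, hN⟩ ω)) (by linarith) hmean hvar
  have hchernoff := measureReal_sum_le_le_exp_mul_mgf_pow hmeas hindep hident ⟨0, hN⟩ 0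
    (t := -(C + 1 / 3)⁻¹) (by simp only [neg_nonpos]; positivity)
    fun n ↦ integrable_exp_mul_of_mem_Icc (hmeas n).aemeasurable (ae_of_all _ (hbdd n))
  rw [mul_zero, exp_zero, one_mul, Fintype.card_fin] at hchernoff
  rw [← ofReal_measureReal]
  gcongr
  calc μ.real {ω | ∑ n, Z n ω ≤ 0} ≤ exp (-ρ / (2 * C + 2 / 3)) ^ N :=
        hchernoff.trans (pow_le_pow_left₀ mgf_nonneg hmgf N)
    _ = exp (-(N * ρ) / (2 * C + 2 / 3)) := by rw [← exp_nat_mul]; ring_nf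
    _ ≤ exp (-(N * ρ) / (2 * C + 4 / 3)) := by
        have hρ0 := hρ.1.le
        rw [exp_le_exp, neg_div, neg_div, neg_le_neg_iff]
        gcongr
        norm_num
end

section
/- Let f : ℝ^d → ℝ be differentiable and let k ∈ {1, …, d}. The following are equivalent: (1) there exists a linear subspace V ⊂ ℝ^d with dim(V) = k such that ∇f(x) ∈ V for all x ∈ ℝ^d; (2) there exist a matrix A ∈ ℝ^{k×d} of full row rank and a differentiable function g : ℝ^k → ℝ such that f(x) = g(Ax) for all x ∈ ℝ^d. -/
/-!
If every gradient of `f` lies in `V`, then `f` is constant along every direction of `Vᗮ`, so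
`f = f ∘ P_V`; writing the orthogonal projection `P_V` in an orthonormal basis of `V` gives a
full-row-rank `A` with `P_V = ι ∘ A`, and `g = f ∘ ι`. Conversely, the chain rule gives
`∇(g ∘ A)(x) = Aᴴ ∇g(Ax)`, which lies in the range of `Aᴴ`, of dimension `rank A = k`.
-/

theorem Matrix.rank_eq_finrank_range_toEuclideanLin {𝕜 m n : Type*} [RCLike 𝕜] [Fintype m]
    [Fintype n] [DecidableEq n] (A : Matrix m n 𝕜) :
    A.rank = Module.finrank 𝕜 (LinearMap.range (Matrix.toEuclideanLin A)) := by
  rw [Matrix.rank_eq_finrank_range_toLin A (EuclideanSpace.basisFun m 𝕜).toBasis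
    (EuclideanSpace.basisFun n 𝕜).toBasis, Matrix.toEuclideanLin_eq_toLin_orthonormal]

theorem Differentiable.apply_add_eq_of_fderiv_apply_eq_zero {𝕜 E G : Type*} [RCLike 𝕜]
    [NormedAddCommGroup E] [NormedSpace 𝕜 E] [NormedAddCommGroup G] [NormedSpace 𝕜 G]
    {f : E → G} (hf : Differentiable 𝕜 f) {v : E} (hv : ∀ y, fderiv 𝕜 f y v = 0) (x : E) :
    f (x + v) = f x := by
  have hline (t : 𝕜) : HasDerivAt (fun s : 𝕜 ↦ f (x + s • v)) (fderiv 𝕜 f (x + t • v) v) t := by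
    have := ((hasDerivAt_id t).smul_const v).const_add x
    rw [one_smul] at this
    exact (hf _).hasFDerivAt.comp_hasDerivAt t this
  simpa using is_const_of_deriv_eq_zero (fun t ↦ (hline t).differentiableAt)
    (fun t ↦ (hline t).deriv.trans (hv _)) 1 0

section Gradient

variable {𝕜 E F : Type*} [RCLike 𝕜] [NormedAddCommGroup E] [InnerProductSpace 𝕜 E]
  [CompleteSpace E] [NormedAddCommGroup F] [InnerProductSpace 𝕜 F] [CompleteSpace F]

theorem Differentiable.eq_comp_starProjection_of_gradient_mem {f : E → 𝕜}
    (hf : Differentiable 𝕜 f) {K : Submodule 𝕜 E} [K.HasOrthogonalProjection]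
    (hK : ∀ x, gradient f x ∈ K) : f = f ∘ K.starProjection := by
  funext x
  have hflat (y : E) : fderiv 𝕜 f y (x - K.starProjection x) = 0 := by
    rw [← inner_gradient_left]
    exact K.sub_starProjection_mem_orthogonal x _ (hK y)
  simpa using hf.apply_add_eq_of_fderiv_apply_eq_zero hflat (K.starProjection x)

theorem gradient_comp_continuousLinearMap {g : F → 𝕜} (L : E →L[𝕜] F) {x : E}
    (hg : DifferentiableAt 𝕜 g (L x)) :
    gradient (g ∘ L) x = L.adjoint (gradient g (L x)) := by
  refine ext_inner_right 𝕜 fun v ↦ ?_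
  rw [inner_gradient_left, fderiv_comp x hg L.differentiableAt, L.fderiv,
    ContinuousLinearMap.adjoint_inner_left, inner_gradient_left]
  rfl

end Gradient

theorem Submodule.exists_rank_eq_and_starProjection_eq_comp_toEuclideanLin {𝕜 : Type*} [RCLike 𝕜]
    {d k : ℕ} (V : Submodule 𝕜 (EuclideanSpace 𝕜 (Fin d))) (hV : Module.finrank 𝕜 V = k) :
    ∃ A : Matrix (Fin k) (Fin d) 𝕜, A.rank = k ∧
      ∃ ι : EuclideanSpace 𝕜 (Fin k) →L[𝕜] EuclideanSpace 𝕜 (Fin d),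
        V.starProjection = ι ∘ Matrix.toEuclideanLin A := by
  let b : OrthonormalBasis (Fin k) 𝕜 V := (stdOrthonormalBasis 𝕜 V).reindex (finCongr hV)
  let L := b.repr.toLinearMap ∘ₗ V.orthogonalProjectionOnto.toLinearMap
  have hL : Function.Surjective L := b.repr.surjective.comp fun v ↦
    ⟨v, V.orthogonalProjectionOnto_mem_subspace_eq_self v⟩
  refine ⟨Matrix.toEuclideanLin.symm L, ?_, V.subtypeL ∘L b.repr.symm.toContinuousLinearEquiv, ?_⟩
  · rw [Matrix.rank_eq_finrank_range_toEuclideanLin, LinearEquiv.apply_symm_apply,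
      LinearMap.range_eq_top.mpr hL, finrank_top, finrank_euclideanSpace_fin]
  · funext x
    simp [L]

theorem gradient_subspace_iff_ridge_general
    {d k : ℕ}
    (f : EuclideanSpace ℝ (Fin d) → ℝ) (hf : Differentiable ℝ f) :
    (∃ V : Submodule ℝ (EuclideanSpace ℝ (Fin d)),
        Module.finrank ℝ V = k ∧ ∀ x, gradient f x ∈ V) ↔
    (∃ A : Matrix (Fin k) (Fin d) ℝ, A.rank = k ∧
      ∃ g : EuclideanSpace ℝ (Fin k) → ℝ, Differentiable ℝ g ∧
        ∀ x, f x = g (Matrix.toEuclideanLin A x)) := by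
  constructor
  · rintro ⟨V, hV, hgrad⟩
    obtain ⟨A, hA, ι, hι⟩ := V.exists_rank_eq_and_starProjection_eq_comp_toEuclideanLin hV
    refine ⟨A, hA, f ∘ ι, hf.comp ι.differentiable, fun x ↦ ?_⟩
    rw [congrFun (hf.eq_comp_starProjection_of_gradient_mem hgrad) x, hι]
    rfl
  · rintro ⟨A, hA, g, hg, hfg⟩
    let L := LinearMap.toContinuousLinearMap (Matrix.toEuclideanLin A)
    refine ⟨LinearMap.range (Matrix.toEuclideanLin A.conjTranspose), ?_, fun x ↦ ?_⟩
    · rw [← Matrix.rank_eq_finrank_range_toEuclideanLin, Matrix.rank_conjTranspose, hA]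
    · have hfL : f = g ∘ L := funext hfg
      rw [hfL, gradient_comp_continuousLinearMap L (hg _),
        Matrix.toEuclideanLin_conjTranspose_eq_adjoint]
      exact LinearMap.mem_range_self _ _

/-- A differentiable `f : ℝ^d → ℝ` has all its gradients in a fixed
`k`-dimensional subspace iff it admits a ridge representation `f(x) = g(Ax)`
with `A ∈ ℝ^{k×d}` of full row rank and `g : ℝ^k → ℝ` differentiable. -/
theorem gradient_subspace_iff_ridge
    {d k : ℕ} (hk : 1 ≤ k) (hkd : k ≤ d)
    (f : EuclideanSpace ℝ (Fin d) → ℝ) (hf : Differentiable ℝ f) :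
    (∃ V : Submodule ℝ (EuclideanSpace ℝ (Fin d)),
        Module.finrank ℝ V = k ∧ ∀ x, gradient f x ∈ V) ↔
    (∃ A : Matrix (Fin k) (Fin d) ℝ, A.rank = k ∧
      ∃ g : EuclideanSpace ℝ (Fin k) → ℝ, Differentiable ℝ g ∧
        ∀ x, f x = g (Matrix.toEuclideanLin A x)) :=
  gradient_subspace_iff_ridge_general f hf
end

section
/- Let η : ℝ^d → ℝ be differentiable, let A ∈ ℝ^{k×d} have full row rank with orthogonal projector P := Aᵀ(AAᵀ)⁻¹A onto range(Aᵀ), and suppose there exist a subspace W ⊆ ker(A) with orthogonal projector Q and a constant τ ≥ 0 such that for all x ∈ ℝ^d: (I − P)∇η(x) ∈ W and ‖(I − P)∇η(x)‖₂ ≤ τ. Then for every x, s ∈ ℝ^d and α > 0, the function f(x) := g(Ax) + η(x) (for any g : ℝ^k → ℝ) satisfies |f(x + α s) − f(x + α P s)| ≤ τ · α · ‖Q s‖₂. -/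
/-!
Since `A P = A`, the ridge part `g (A x)` takes the same value at `x + α s` and `x + α P s`.
The two points differ by `α (s - P s)`, and because `P` is symmetric the derivative of `η` in that
direction is `α ⟪(I - P) ∇η, s⟫ = α ⟪(I - P) ∇η, Q s⟫`, using `(I - P) ∇η ∈ W`. It is thus at most
`τ α ‖Q s‖` everywhere, and the mean value inequality bounds the change of `η` by the same amount.
-/

open RealInnerProductSpace Set

namespace Matrix

variable {m n R : Type*} [Fintype m] [DecidableEq m]

theorem isUnit_of_rank_eq_card [Field R] {M : Matrix m m R} (hM : M.rank = Fintype.card m) :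
    IsUnit M := by
  have hrange : LinearMap.range M.mulVecLin = ⊤ :=
    Submodule.eq_top_of_finrank_eq (by rw [← rank, hM, Module.finrank_fintype_fun_eq_card])
  exact mulVec_surjective_iff_isUnit.mp (LinearMap.range_eq_top.mp hrange)

theorem isUnit_mul_transpose_of_rank_eq_card [Fintype n] [Field R] [LinearOrder R]
    [IsStrictOrderedRing R] {A : Matrix m n R} (hA : A.rank = Fintype.card m) :
    IsUnit (A * Aᵀ) :=
  isUnit_of_rank_eq_card (by rw [rank_self_mul_transpose, hA])

variable [CommRing R] [Fintype n]

theorem mul_transpose_mul_nonsing_inv_mul {A : Matrix m n R} (hA : IsUnit (A * Aᵀ)) :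
    A * (Aᵀ * (A * Aᵀ)⁻¹ * A) = A := by
  rw [← Matrix.mul_assoc, ← Matrix.mul_assoc,
    mul_nonsing_inv _ ((isUnit_iff_isUnit_det _).mp hA), Matrix.one_mul]

theorem isSymm_transpose_mul_nonsing_inv_mul (A : Matrix m n R) :
    (Aᵀ * (A * Aᵀ)⁻¹ * A).IsSymm := by
  rw [IsSymm, transpose_mul, transpose_mul, transpose_transpose, transpose_nonsing_inv,
    transpose_mul, transpose_transpose, Matrix.mul_assoc]

end Matrix

section InnerProductSpace

variable {𝕜 E : Type*} [RCLike 𝕜] [NormedAddCommGroup E] [InnerProductSpace 𝕜 E]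

theorem Submodule.norm_inner_le_norm_mul_norm_starProjection (W : Submodule 𝕜 E)
    [W.HasOrthogonalProjection] {w : E} (hw : w ∈ W) (s : E) :
    ‖inner 𝕜 w s‖ ≤ ‖w‖ * ‖W.starProjection s‖ := by
  rw [← W.starProjection_eq_self_iff.mpr hw, W.inner_starProjection_left_eq_right,
    W.starProjection_eq_self_iff.mpr hw]
  exact norm_inner_le_norm w _

end InnerProductSpace

theorem norm_sub_le_of_norm_fderiv_apply_le {E F : Type*} [NormedAddCommGroup E]
    [NormedSpace ℝ E] [NormedAddCommGroup F] [NormedSpace ℝ F] {f : E → F}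
    (hf : Differentiable ℝ f) {x u : E} {C : ℝ} (hC : ∀ y, ‖fderiv ℝ f y u‖ ≤ C) :
    ‖f (x + u) - f x‖ ≤ C := by
  have hderiv : ∀ t ∈ Icc (0 : ℝ) 1, HasDerivWithinAt (fun t : ℝ => f (x + t • u))
      (fderiv ℝ f (x + t • u) u) (Icc 0 1) t := by
    intro t _
    have hline : HasDerivAt (fun t : ℝ => x + t • u) u t := by
      simpa using ((hasDerivAt_id t).smul_const u).const_add x
    exact ((hf _).hasFDerivAt.comp_hasDerivAt t hline).hasDerivWithinAt
  simpa using norm_image_sub_le_of_norm_deriv_le_segment_01' hderiv fun t _ => hC _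

theorem abs_sub_le_mul_norm_starProjection_of_gradient_sub_mem {E : Type*}
    [NormedAddCommGroup E] [InnerProductSpace ℝ E] [CompleteSpace E] {η : E → ℝ}
    (hη : Differentiable ℝ η) {p : E →ₗ[ℝ] E} (hp : p.IsSymmetric) (W : Submodule ℝ E)
    [W.HasOrthogonalProjection] {τ : ℝ} (hmem : ∀ x, gradient η x - p (gradient η x) ∈ W)
    (hbdd : ∀ x, ‖gradient η x - p (gradient η x)‖ ≤ τ) (x s : E) :
    |η (x + s) - η (x + p s)| ≤ τ * ‖W.starProjection s‖ := by
  have hdir : ∀ y, ‖fderiv ℝ η y (s - p s)‖ ≤ τ * ‖W.starProjection s‖ := by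
    intro y
    rw [← inner_gradient_left, inner_sub_right, ← hp, ← inner_sub_left]
    calc ‖⟪gradient η y - p (gradient η y), s⟫‖
        ≤ ‖gradient η y - p (gradient η y)‖ * ‖W.starProjection s‖ :=
          W.norm_inner_le_norm_mul_norm_starProjection (hmem y) s
      _ ≤ τ * ‖W.starProjection s‖ := by gcongr; exact hbdd y
  simpa [← Real.norm_eq_abs] using norm_sub_le_of_norm_fderiv_apply_le hη hdir (x := x + p s)

theorem nearly_ridge_approx_invariance_general
    {d k : ℕ}
    (A : Matrix (Fin k) (Fin d) ℝ) (hA : A.rank = k)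
    (g : EuclideanSpace ℝ (Fin k) → ℝ)
    (η : EuclideanSpace ℝ (Fin d) → ℝ) (hη : Differentiable ℝ η)
    (P : Matrix (Fin d) (Fin d) ℝ)
    (hP : P = A.transpose * (A * A.transpose)⁻¹ * A)
    (W : Submodule ℝ (EuclideanSpace ℝ (Fin d)))
    (τ : ℝ)
    (hmem : ∀ x, gradient η x - Matrix.toEuclideanLin P (gradient η x) ∈ W)
    (hbdd : ∀ x, ‖gradient η x - Matrix.toEuclideanLin P (gradient η x)‖ ≤ τ)
    (f : EuclideanSpace ℝ (Fin d) → ℝ)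
    (hf : ∀ x, f x = g (Matrix.toEuclideanLin A x) + η x)
    (x s : EuclideanSpace ℝ (Fin d)) (α : ℝ) (hα : 0 < α) :
    |f (x + α • s) - f (x + α • Matrix.toEuclideanLin P s)| ≤
      τ * α * ‖(Submodule.orthogonalProjection W s : EuclideanSpace ℝ (Fin d))‖ := by
  have hAP : A * P = A := hP ▸ Matrix.mul_transpose_mul_nonsing_inv_mul
    (Matrix.isUnit_mul_transpose_of_rank_eq_card (by rw [hA, Fintype.card_fin]))
  have hPsymm : (Matrix.toEuclideanLin P).IsSymmetric := by
    rw [Matrix.isSymmetric_toEuclideanLin_iff, Matrix.isHermitian_iff_isSymm, hP]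
    exact Matrix.isSymm_transpose_mul_nonsing_inv_mul A
  have hridge : Matrix.toEuclideanLin A (Matrix.toEuclideanLin P s) = Matrix.toEuclideanLin A s := by
    rw [← LinearMap.comp_apply, ← Matrix.toLpLin_mul_same, hAP]
  rw [hf, hf, map_add, map_add, map_smul, map_smul, hridge, add_sub_add_left_eq_sub,
    ← map_smul]
  calc _ ≤ τ * ‖W.starProjection (α • s)‖ :=
        abs_sub_le_mul_norm_starProjection_of_gradient_sub_mem hη hPsymm W hmem hbdd x (α • s)
    _ = _ := by
        rw [map_smul, norm_smul, Real.norm_of_nonneg hα.le, Submodule.starProjection_apply]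
        ring

/-- Approximate invariance to inactive directions: if the inactive gradient
`(I − P)∇η` lies in a subspace `W ⊆ ker(A)` (with orthogonal projector `Q`) and
is bounded by `τ`, then for `f(x) = g(Ax) + η(x)`,
`|f(x + αs) − f(x + αPs)| ≤ τ α ‖Qs‖`, where `P = Aᵀ(AAᵀ)⁻¹A`. -/
theorem nearly_ridge_approx_invariance
    {d k : ℕ} (hkd : k ≤ d)
    (A : Matrix (Fin k) (Fin d) ℝ) (hA : A.rank = k)
    (g : EuclideanSpace ℝ (Fin k) → ℝ)
    (η : EuclideanSpace ℝ (Fin d) → ℝ) (hη : Differentiable ℝ η)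
    (P : Matrix (Fin d) (Fin d) ℝ)
    (hP : P = A.transpose * (A * A.transpose)⁻¹ * A)
    (W : Submodule ℝ (EuclideanSpace ℝ (Fin d)))
    (hWker : W ≤ LinearMap.ker (Matrix.toEuclideanLin A))
    (τ : ℝ) (hτ : 0 ≤ τ)
    (hmem : ∀ x, gradient η x - Matrix.toEuclideanLin P (gradient η x) ∈ W)
    (hbdd : ∀ x, ‖gradient η x - Matrix.toEuclideanLin P (gradient η x)‖ ≤ τ)
    (f : EuclideanSpace ℝ (Fin d) → ℝ)
    (hf : ∀ x, f x = g (Matrix.toEuclideanLin A x) + η x)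
    (x s : EuclideanSpace ℝ (Fin d)) (α : ℝ) (hα : 0 < α) :
    |f (x + α • s) - f (x + α • Matrix.toEuclideanLin P s)| ≤
      τ * α * ‖(Submodule.orthogonalProjection W s : EuclideanSpace ℝ (Fin d))‖ :=
  nearly_ridge_approx_invariance_general A hA g η hη P hP W τ hmem hbdd f hf x s α hα
end
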